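/- For complex numbers A₁, A₂, C₁, C₂ (playing the roles A₁ = A_{34}, A₂ = A_{45}, C₁ = C_{34}, C₂ = C_{45}), the quantity Φ₁' := 8|A₁|² + 8|A₂|² + 8|C₁|² + 8|C₂|² + 4 Re(A₁ Ā₂ + C₁ C̄₂) + 2 Re(A₁ C̄₂ + C₁ Ā₂) - 2|A₁ + C₁|² - 2|A₂ + C₂|² satisfies Φ₁' ≥ |A₁|² + |A₂|² + |C₁|² + |C₂|²; in particular Φ₁' ≥ 0. -/

import Mathlib

/-!
The excess `Φ₁' - (|A₁|² + |A₂|² + |C₁|² + |C₂|²)` is a real quadratic form in `(A₁, A₂, C₁, C₂)`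
whose Gram matrix has the eigenvectors `(1,1,1,1)`, `(1,1,-1,-1)`, `(1,-1,-1,1)`, `(1,-1,1,-1)`
with eigenvalues `6, 8, 6, 0`; hence it equals
`(3|A₁+A₂+C₁+C₂|² + 4|A₁+A₂-C₁-C₂|² + 3|A₁-A₂-C₁+C₂|²) / 2`.
-/

open scoped RealInnerProductSpace

theorem quadratic_form_eq_sum_sq {E : Type*} [NormedAddCommGroup E] [InnerProductSpace ℝ E]
    (x₁ x₂ y₁ y₂ : E) :
    5 * (‖x₁‖ ^ 2 + ‖x₂‖ ^ 2 + ‖y₁‖ ^ 2 + ‖y₂‖ ^ 2) + 4 * (⟪x₂, x₁⟫ + ⟪y₂, y₁⟫)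
        + 2 * (⟪y₂, x₁⟫ + ⟪x₂, y₁⟫) - 4 * (⟪x₁, y₁⟫ + ⟪x₂, y₂⟫) =
      (3 * ‖x₁ + x₂ + y₁ + y₂‖ ^ 2 + 4 * ‖x₁ + x₂ - y₁ - y₂‖ ^ 2
        + 3 * ‖x₁ - x₂ - y₁ + y₂‖ ^ 2) / 2 := by
  simp only [← real_inner_self_eq_norm_sq, inner_add_left, inner_add_right, inner_sub_left,
    inner_sub_right]
  rw [real_inner_comm x₁ x₂, real_inner_comm x₁ y₁, real_inner_comm x₁ y₂, real_inner_comm x₂ y₁,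
    real_inner_comm x₂ y₂, real_inner_comm y₁ y₂]
  ring

theorem stmt9 (A₁ A₂ C₁ C₂ : ℂ) :
    ‖A₁‖ ^ 2 + ‖A₂‖ ^ 2 + ‖C₁‖ ^ 2 + ‖C₂‖ ^ 2 ≤
      8 * ‖A₁‖ ^ 2 + 8 * ‖A₂‖ ^ 2
        + 8 * ‖C₁‖ ^ 2 + 8 * ‖C₂‖ ^ 2
        + 4 * (A₁ * (starRingEnd ℂ) A₂ + C₁ * (starRingEnd ℂ) C₂).re
        + 2 * (A₁ * (starRingEnd ℂ) C₂ + C₁ * (starRingEnd ℂ) A₂).re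
        - 2 * ‖A₁ + C₁‖ ^ 2 - 2 * ‖A₂ + C₂‖ ^ 2 ∧
    0 ≤ 8 * ‖A₁‖ ^ 2 + 8 * ‖A₂‖ ^ 2
        + 8 * ‖C₁‖ ^ 2 + 8 * ‖C₂‖ ^ 2
        + 4 * (A₁ * (starRingEnd ℂ) A₂ + C₁ * (starRingEnd ℂ) C₂).re
        + 2 * (A₁ * (starRingEnd ℂ) C₂ + C₁ * (starRingEnd ℂ) A₂).re
        - 2 * ‖A₁ + C₁‖ ^ 2 - 2 * ‖A₂ + C₂‖ ^ 2 := by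
  simp only [Complex.add_re, ← Complex.inner, norm_add_sq_real]
  have hsq : 0 ≤ (3 * ‖A₁ + A₂ + C₁ + C₂‖ ^ 2 + 4 * ‖A₁ + A₂ - C₁ - C₂‖ ^ 2
      + 3 * ‖A₁ - A₂ - C₁ + C₂‖ ^ 2) / 2 := by positivity
  have hnorms : 0 ≤ ‖A₁‖ ^ 2 + ‖A₂‖ ^ 2 + ‖C₁‖ ^ 2 + ‖C₂‖ ^ 2 := by positivity
  have := quadratic_form_eq_sum_sq A₁ A₂ C₁ C₂
  exact ⟨by linarith, by linarith⟩
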